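/- arXiv:2111.11834 — 10 statements merged into one kernel-verified Lean document; each statement's English description precedes it below -/
import Mathlib

section
/- Let (G,t) be a threshold instance with t(v) ≤ p for every vertex v, let S be a harmless set, and let R, C' ⊆ V(G) be disjoint sets such that: the pads N²_{G−R}[x'] (closed balls of radius 2 around x' in the graph G − R) for x' ∈ C' are pairwise disjoint; every vertex of every pad has a neighbour in R; and |C'| > (p−1)·|R|. Then there exists a centre x' ∈ C' whose pad N²_{G−R}[x'] does not intersect S. -/
/-! If every pad met `S`, each centre would own a vertex of `S` adjacent to `R`, and these
vertices are distinct because the pads are disjoint. A harmless set has at most `p - 1`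
vertices in the neighbourhood of any single vertex, so at most `(p - 1)·|R|` vertices of `S`
are adjacent to `R`, contradicting `|C'| > (p - 1)·|R|`. -/

/-- A set `S` is harmless for the threshold instance `(G, t)` if every vertex `v`
has strictly fewer than `t v` neighbours in `S`. -/
def Harmless {V : Type*} [Fintype V] [DecidableEq V] (G : SimpleGraph V)
    [DecidableRel G.Adj] (t : V → ℕ) (S : Finset V) : Prop :=
  ∀ v : V, (G.neighborFinset v ∩ S).card < t v

/-- The pad of `x`: the set of vertices at distance at most 2 from `x` in the
graph `G − R` (for `x ∉ R`), i.e. the closed ball of radius 2 around `x` in `G − R`. -/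
def padSet {V : Type*} (G : SimpleGraph V) (R : Finset V) (x : V) : Set V :=
  {y | y ∉ R ∧ (y = x ∨ G.Adj x y ∨ ∃ z, z ∉ R ∧ G.Adj x z ∧ G.Adj z y)}

open Finset

theorem Finset.card_le_card_of_pairwiseDisjoint_of_forall_exists {ι α : Type*}
    {C : Finset ι} {T : Finset α} {P : ι → Set α} (hP : (C : Set ι).PairwiseDisjoint P)
    (hmeet : ∀ x ∈ C, ∃ y ∈ T, y ∈ P x) : #C ≤ #T :=
  card_le_card_of_forall_subsingleton (fun x y => y ∈ P x) hmeet
    fun _ _ _ hx _ hx' => hP.elim hx.1 hx'.1 (Set.not_disjoint_iff.2 ⟨_, hx.2, hx'.2⟩)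

section Harmless

variable {V : Type*} [Fintype V] [DecidableEq V] {G : SimpleGraph V} [DecidableRel G.Adj]
  {t : V → ℕ} {p : ℕ} {S : Finset V}

theorem Harmless.card_neighborFinset_inter_le (hS : Harmless G t S) (htp : ∀ v, t v ≤ p)
    (v : V) : #(G.neighborFinset v ∩ S) ≤ p - 1 :=
  (Nat.le_sub_one_of_lt (hS v)).trans (Nat.sub_le_sub_right (htp v) 1)

theorem Harmless.card_biUnion_neighborFinset_inter_le (hS : Harmless G t S)
    (htp : ∀ v, t v ≤ p) (R : Finset V) :
    #(R.biUnion fun r => G.neighborFinset r ∩ S) ≤ (p - 1) * #R :=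
  (card_biUnion_le_card_mul _ _ _ fun r _ => hS.card_neighborFinset_inter_le htp r).trans_eq
    (mul_comm _ _)

end Harmless

theorem exists_pad_avoiding_general {V : Type*} [Fintype V] [DecidableEq V]
    (G : SimpleGraph V) [DecidableRel G.Adj] (t : V → ℕ) (p : ℕ)
    (htp : ∀ v, t v ≤ p)
    (S R C' : Finset V) (hS : Harmless G t S)
    (hpads : ∀ x ∈ C', ∀ y ∈ C', x ≠ y → Disjoint (padSet G R x) (padSet G R y))
    (hdom : ∀ x ∈ C', ∀ y ∈ padSet G R x, ∃ r ∈ R, G.Adj y r)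
    (hcard : (p - 1) * R.card < C'.card) :
    ∃ x' ∈ C', padSet G R x' ∩ ↑S = ∅ := by
  by_contra! hmeet
  have hmeetNbhd : ∀ x ∈ C', ∃ y ∈ R.biUnion fun r => G.neighborFinset r ∩ S,
      y ∈ padSet G R x := by
    intro x hx
    obtain ⟨y, hyP, hyS⟩ := hmeet x hx
    obtain ⟨r, hr, hyr⟩ := hdom x hx y hyP
    exact ⟨y, mem_biUnion.2 ⟨r, hr, mem_inter.2 ⟨G.mem_neighborFinset r y |>.2 hyr.symm, hyS⟩⟩,
      hyP⟩
  exact hcard.not_ge <| (card_le_card_of_pairwiseDisjoint_of_forall_exists hpads hmeetNbhd).trans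
    (hS.card_biUnion_neighborFinset_inter_le htp R)

/-- If all thresholds are at most `p`, `S` is harmless, the pads of the centres
`C'` (disjoint from `R`) are pairwise disjoint, every pad vertex has a
neighbour in `R`, and `|C'| > (p-1)·|R|`, then some centre has a pad avoiding `S`. -/
theorem exists_pad_avoiding {V : Type*} [Fintype V] [DecidableEq V]
    (G : SimpleGraph V) [DecidableRel G.Adj] (t : V → ℕ) (p : ℕ)
    (ht : ∀ v, 1 ≤ t v) (htp : ∀ v, t v ≤ p)
    (S R C' : Finset V) (hS : Harmless G t S) (hdisj : Disjoint R C')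
    (hpads : ∀ x ∈ C', ∀ y ∈ C', x ≠ y → Disjoint (padSet G R x) (padSet G R y))
    (hdom : ∀ x ∈ C', ∀ y ∈ padSet G R x, ∃ r ∈ R, G.Adj y r)
    (hcard : (p - 1) * R.card < C'.card) :
    ∃ x' ∈ C', padSet G R x' ∩ ↑S = ∅ :=
  exists_pad_avoiding_general G t p htp S R C' hS hpads hdom hcard
end

section
/- Let (G,t) be a threshold instance and let R, C ⊆ V(G) be disjoint sets such that all vertices of C have the same neighbourhood in R (i.e. N(x) ∩ R is one fixed set for all x ∈ C). For x ∈ C define the signature σ(x) = { (t(u), N(u) ∩ R) : u ∈ N_{G−R}(x) } and the pad N²_{G−R}[x] (closed ball of radius 2 around x in G − R). Let S be a harmless set for (G,t), let x ∈ S ∩ C, and let x' ∈ C satisfy σ(x') = σ(x) and N²_{G−R}[x'] ∩ S = ∅. Then S' = (S \ {x}) ∪ {x'} is a harmless set for (G,t) with |S'| = |S|. -/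
/-- The signature of `x`: the set of pairs `(t u, N(u) ∩ R)` for the neighbours
`u` of `x` in `G − R`. -/
def sig {V : Type*} [Fintype V] [DecidableEq V] (G : SimpleGraph V)
    [DecidableRel G.Adj] (t : V → ℕ) (R : Finset V) (x : V) : Set (ℕ × Finset V) :=
  {q | ∃ u, G.Adj x u ∧ u ∉ R ∧ q = (t u, G.neighborFinset u ∩ R)}

/-- Exchange argument: a solution vertex `x ∈ C` can be swapped for any centre
`x' ∈ C` with the same signature whose pad avoids `S`. -/
theorem harmless_exchange {V : Type*} [Fintype V] [DecidableEq V]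
    (G : SimpleGraph V) [DecidableRel G.Adj] (t : V → ℕ) (ht : ∀ v, 1 ≤ t v)
    (R C S : Finset V) (hdisj : Disjoint R C)
    (huni : ∀ x ∈ C, ∀ x₂ ∈ C, G.neighborFinset x ∩ R = G.neighborFinset x₂ ∩ R)
    (hS : Harmless G t S) (x x' : V) (hxS : x ∈ S) (hxC : x ∈ C) (hx'C : x' ∈ C)
    (hsig : sig G t R x' = sig G t R x) (hpad : padSet G R x' ∩ ↑S = ∅) :
    Harmless G t (insert x' (S.erase x)) ∧ (insert x' (S.erase x)).card = S.card := by
  have hx'R : x' ∉ R := fun h => (Finset.disjoint_left.mp hdisj h) hx'C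
  have hxR : x ∉ R := fun h => (Finset.disjoint_left.mp hdisj h) hxC
  have hnS : ∀ y, y ∈ padSet G R x' → y ∉ S := by
    intro y hy hyS
    have : y ∈ padSet G R x' ∩ ↑S := ⟨hy, hyS⟩
    rw [hpad] at this; exact this
  have hx'S : x' ∉ S := hnS x' ⟨hx'R, Or.inl rfl⟩
  have hxx' : x' ≠ x := fun h => hx'S (h ▸ hxS)
  constructor
  · intro v
    by_cases hadj : G.Adj v x'
    · by_cases hvR : v ∈ R
      · -- v ∈ R: swap preserves the count exactly
        have hvNx' : v ∈ G.neighborFinset x' ∩ R := by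
          simp [SimpleGraph.mem_neighborFinset, hadj.symm, hvR]
        rw [huni x' hx'C x hxC] at hvNx'
        have hvx : G.Adj v x :=
          (((SimpleGraph.mem_neighborFinset _ _ _).mp (Finset.mem_inter.mp hvNx').1).symm)
        have heq : G.neighborFinset v ∩ insert x' (S.erase x)
            = insert x' ((G.neighborFinset v ∩ S).erase x) := by
          ext y
          simp only [Finset.mem_inter, Finset.mem_insert, Finset.mem_erase,
            SimpleGraph.mem_neighborFinset]
          constructor
          · rintro ⟨hyv, hy | ⟨hyx, hyS⟩⟩
            · exact Or.inl hy
            · exact Or.inr ⟨hyx, hyv, hyS⟩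
          · rintro (rfl | ⟨hyx, hyv, hyS⟩)
            · exact ⟨hadj, Or.inl rfl⟩
            · exact ⟨hyv, Or.inr ⟨hyx, hyS⟩⟩
        rw [heq, Finset.card_insert_of_notMem (by simp [hx'S]),
          Finset.card_erase_of_mem (by simp [SimpleGraph.mem_neighborFinset, hvx, hxS])]
        have h1 : 1 ≤ (G.neighborFinset v ∩ S).card :=
          Finset.card_pos.mpr ⟨x, by simp [SimpleGraph.mem_neighborFinset, hvx, hxS]⟩
        have h2 := hS v
        omega
      · -- v ∉ R: use the signature
        have hvS : v ∉ S := hnS v ⟨hvR, Or.inr (Or.inl hadj.symm)⟩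
        have hmem : (t v, G.neighborFinset v ∩ R) ∈ sig G t R x' :=
          ⟨v, hadj.symm, hvR, rfl⟩
        rw [hsig] at hmem
        obtain ⟨u, hxu, huR, hq⟩ := hmem
        have htu : t u = t v := (Prod.mk.injEq .. ▸ hq).1.symm
        have hNu : G.neighborFinset u ∩ R = G.neighborFinset v ∩ R :=
          ((Prod.mk.injEq .. ▸ hq).2).symm
        have hsub1 : G.neighborFinset v ∩ insert x' (S.erase x)
            ⊆ insert x' (G.neighborFinset v ∩ R ∩ S) := by
          intro y hy
          obtain ⟨hyv, hy2⟩ := Finset.mem_inter.mp hy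
          rcases Finset.mem_insert.mp hy2 with rfl | hy3
          · exact Finset.mem_insert_self _ _
          · have hyS : y ∈ S := (Finset.mem_erase.mp hy3).2
            have hyR : y ∈ R := by
              by_contra hyR
              exact hnS y ⟨hyR, Or.inr (Or.inr ⟨v, hvR, hadj.symm,
                (SimpleGraph.mem_neighborFinset _ _ _).mp hyv⟩)⟩ hyS
            exact Finset.mem_insert_of_mem
              (Finset.mem_inter.mpr ⟨Finset.mem_inter.mpr ⟨hyv, hyR⟩, hyS⟩)
        have hsub2 : insert x (G.neighborFinset v ∩ R ∩ S) ⊆ G.neighborFinset u ∩ S := by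
          intro y hy
          rcases Finset.mem_insert.mp hy with rfl | hy2
          · simp [SimpleGraph.mem_neighborFinset, hxu.symm, hxS]
          · obtain ⟨hy3, hyS⟩ := Finset.mem_inter.mp hy2
            rw [← hNu] at hy3
            exact Finset.mem_inter.mpr ⟨(Finset.mem_inter.mp hy3).1, hyS⟩
        calc (G.neighborFinset v ∩ insert x' (S.erase x)).card
            ≤ (insert x' (G.neighborFinset v ∩ R ∩ S)).card := Finset.card_le_card hsub1
          _ ≤ (G.neighborFinset v ∩ R ∩ S).card + 1 := Finset.card_insert_le _ _
          _ = (insert x (G.neighborFinset v ∩ R ∩ S)).card := by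
              rw [Finset.card_insert_of_notMem (by simp [hxR])]
          _ ≤ (G.neighborFinset u ∩ S).card := Finset.card_le_card hsub2
          _ < t u := hS u
          _ = t v := htu
    · -- v not adjacent to x'
      have hsub : G.neighborFinset v ∩ insert x' (S.erase x) ⊆ G.neighborFinset v ∩ S := by
        intro y hy
        obtain ⟨hyv, hy2⟩ := Finset.mem_inter.mp hy
        rcases Finset.mem_insert.mp hy2 with rfl | hy3
        · exact absurd ((SimpleGraph.mem_neighborFinset _ _ _).mp hyv) hadj
        · exact Finset.mem_inter.mpr ⟨hyv, (Finset.mem_erase.mp hy3).2⟩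
      exact lt_of_le_of_lt (Finset.card_le_card hsub) (hS v)
  · rw [Finset.card_insert_of_notMem (by simp [hx'S, hxx']),
      Finset.card_erase_of_mem hxS]
    have : 1 ≤ S.card := Finset.card_pos.mpr ⟨x, hxS⟩
    omega
end

section
/- Let (G,t) be a threshold instance, K ⊆ V(G), and let u, v ∉ K be two distinct vertices with N(u) ∩ K = N(v) ∩ K and t(v) ≤ t(u). Then for every set S ⊆ K: S is harmless for (G,t) if and only if S is harmless for (G − u, t restricted to V(G) \ {u}). Hence deleting the vertex of larger threshold among two vertices outside K with equal projections onto K yields an equivalent annotated instance. -/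
/-- A set `S` is harmless for the threshold instance `(G, t)` if every vertex `v`
has strictly fewer than `t v` neighbours in `S`. -/
def HarmlessSet {W : Type*} (G : SimpleGraph W) (t : W → ℕ) (S : Set W) : Prop :=
  ∀ v : W, (G.neighborSet v ∩ S).ncard < t v

/-- If `u, v ∉ K` are distinct, have the same neighbourhood in `K`, and
`t v ≤ t u`, then for every `S ⊆ K`, `S` is harmless for `(G, t)` iff `S` is
harmless for the instance obtained by deleting `u`. -/
theorem harmless_delete_twin {V : Type*} [Fintype V] (G : SimpleGraph V)
    (t : V → ℕ) (ht : ∀ v, 1 ≤ t v) (K : Set V) (u v : V) (huv : u ≠ v)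
    (hu : u ∉ K) (hv : v ∉ K)
    (hN : G.neighborSet u ∩ K = G.neighborSet v ∩ K) (htuv : t v ≤ t u) :
    ∀ S : Set V, S ⊆ K →
      (HarmlessSet G t S ↔
        HarmlessSet (G.induce ({u}ᶜ : Set V)) (fun w => t ↑w)
          {w : ({u}ᶜ : Set V) | ↑w ∈ S}) := by
  intro S hSK
  have card_eq : ∀ w : ({u}ᶜ : Set V),
      ((G.induce ({u}ᶜ : Set V)).neighborSet w ∩ {x : ({u}ᶜ : Set V) | ↑x ∈ S}).ncard
        = (G.neighborSet (↑w) ∩ S).ncard := by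
    intro w
    have himg : Subtype.val ''
        ((G.induce ({u}ᶜ : Set V)).neighborSet w ∩ {x : ({u}ᶜ : Set V) | ↑x ∈ S})
        = G.neighborSet (↑w) ∩ S := by
      ext x
      simp only [Set.mem_image, Set.mem_inter_iff, SimpleGraph.mem_neighborSet,
        Set.mem_setOf_eq, SimpleGraph.comap_adj]
      constructor
      · rintro ⟨y, ⟨hadj, hyS⟩, rfl⟩
        exact ⟨hadj, hyS⟩
      · rintro ⟨hadj, hxS⟩
        have hxu : x ∈ ({u}ᶜ : Set V) := by
          simp only [Set.mem_compl_iff, Set.mem_singleton_iff]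
          rintro rfl; exact hu (hSK hxS)
        exact ⟨⟨x, hxu⟩, ⟨hadj, hxS⟩, rfl⟩
    rw [← himg, Set.ncard_image_of_injective _ Subtype.val_injective]
  constructor
  · intro h w
    rw [card_eq w]
    exact h ↑w
  · intro h w
    by_cases hwu : w = u
    · subst hwu
      have huS : G.neighborSet w ∩ S = G.neighborSet v ∩ S := by
        ext x
        simp only [Set.mem_inter_iff, SimpleGraph.mem_neighborSet]
        constructor
        · rintro ⟨hadj, hxS⟩
          have : x ∈ G.neighborSet v ∩ K := hN ▸ ⟨hadj, hSK hxS⟩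
          exact ⟨this.1, hxS⟩
        · rintro ⟨hadj, hxS⟩
          have : x ∈ G.neighborSet w ∩ K := hN ▸ (⟨hadj, hSK hxS⟩ : x ∈ G.neighborSet v ∩ K)
          exact ⟨this.1, hxS⟩
      have hvu : v ∈ ({w}ᶜ : Set V) := by
        simp only [Set.mem_compl_iff, Set.mem_singleton_iff]
        exact fun hh => huv hh.symm
      have := h ⟨v, hvu⟩
      rw [card_eq ⟨v, hvu⟩] at this
      calc (G.neighborSet w ∩ S).ncard = (G.neighborSet v ∩ S).ncard := by rw [huS]
        _ < t v := this
        _ ≤ t w := htuv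
    · have hwmem : w ∈ ({u}ᶜ : Set V) := by
        simpa [Set.mem_compl_iff] using hwu
      have := h ⟨w, hwmem⟩
      rwa [card_eq ⟨w, hwmem⟩] at this
end

section
/- Let (G,t) be a threshold instance and K ⊆ V(G). Construct (G',t') from (G,t) by adding two new vertices a and b, making a adjacent to b and to every vertex of V(G) \ K, and setting t'(a) = t'(b) = 1 while t' agrees with t on V(G). Then for every k: G' has a harmless set of size at least k with respect to t' if and only if G has a harmless set S ⊆ K of size at least k with respect to t. In particular, every harmless set of (G',t') is contained in K. -/
/-- The graph `G'` obtained from `G` by adding two new vertices `a = inr false`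
and `b = inr true`, where `a` is adjacent to `b` and to every vertex outside `K`. -/
def extGraph {V : Type*} (G : SimpleGraph V) (K : Set V) : SimpleGraph (V ⊕ Bool) :=
  SimpleGraph.fromRel (fun a b =>
    (a = Sum.inr false ∧ b = Sum.inr true) ∨
    (∃ v, v ∉ K ∧ a = Sum.inr false ∧ b = Sum.inl v) ∨
    (∃ v w, a = Sum.inl v ∧ b = Sum.inl w ∧ G.Adj v w))

/-- The extended threshold function: `t` on the old vertices and `1` on the two
new vertices `a` and `b`. -/
def extT {V : Type*} (t : V → ℕ) : V ⊕ Bool → ℕ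
  | Sum.inl v => t v
  | Sum.inr _ => 1

section Aux
variable {V : Type*} (G : SimpleGraph V) (K : Set V)

lemma ext_adj_inl_inl (v w : V) : (extGraph G K).Adj (Sum.inl v) (Sum.inl w) ↔ G.Adj v w := by
  simp only [extGraph, SimpleGraph.fromRel_adj]
  constructor
  · rintro ⟨hne, h | h⟩ <;>
      rcases h with ⟨h1, h2⟩ | ⟨u, hu, h1, h2⟩ | ⟨x, y, h1, h2, h3⟩ <;> simp_all
    · exact h3.symm
  · intro h
    exact ⟨by simp [h.ne], Or.inl (Or.inr (Or.inr ⟨v, w, by trivial, by trivial, h⟩))⟩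

lemma ext_adj_inl_a (v : V) : (extGraph G K).Adj (Sum.inl v) (Sum.inr false) ↔ v ∉ K := by
  simp only [extGraph, SimpleGraph.fromRel_adj]
  constructor
  · rintro ⟨hne, h | h⟩ <;>
      rcases h with ⟨h1, h2⟩ | ⟨u, hu, h1, h2⟩ | ⟨x, y, h1, h2, h3⟩ <;> simp_all
  · intro h
    exact ⟨by simp, Or.inr (Or.inr (Or.inl ⟨v, h, by trivial, by trivial⟩))⟩

lemma ext_adj_inl_b (v : V) : ¬ (extGraph G K).Adj (Sum.inl v) (Sum.inr true) := by
  simp only [extGraph, SimpleGraph.fromRel_adj]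
  rintro ⟨hne, h | h⟩ <;>
    rcases h with ⟨h1, h2⟩ | ⟨u, hu, h1, h2⟩ | ⟨x, y, h1, h2, h3⟩ <;> simp_all

lemma ext_adj_a_b : (extGraph G K).Adj (Sum.inr false) (Sum.inr true) := by
  simp only [extGraph, SimpleGraph.fromRel_adj]
  exact ⟨by simp, Or.inl (Or.inl ⟨by trivial, by trivial⟩)⟩

variable [Fintype V] (t : V → ℕ)

lemma ext_contained {S' : Set (V ⊕ Bool)} (hS' : HarmlessSet (extGraph G K) (extT t) S') :
    S' ⊆ Sum.inl '' K := by
  have ha : ((extGraph G K).neighborSet (Sum.inr false) ∩ S') = ∅ :=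
    (Set.ncard_eq_zero (Set.toFinite _)).mp (Nat.lt_one_iff.mp (hS' (Sum.inr false)))
  have hb : ((extGraph G K).neighborSet (Sum.inr true) ∩ S') = ∅ :=
    (Set.ncard_eq_zero (Set.toFinite _)).mp (Nat.lt_one_iff.mp (hS' (Sum.inr true)))
  intro x hx
  match x with
  | Sum.inl v =>
    refine ⟨v, ?_, rfl⟩
    by_contra hv
    have : Sum.inl v ∈ (extGraph G K).neighborSet (Sum.inr false) ∩ S' :=
      ⟨((ext_adj_inl_a G K v).mpr hv).symm, hx⟩
    simp [ha] at this
  | Sum.inr false =>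
    have : Sum.inr false ∈ (extGraph G K).neighborSet (Sum.inr true) ∩ S' :=
      ⟨(ext_adj_a_b G K).symm, hx⟩
    simp [hb] at this
  | Sum.inr true =>
    have : Sum.inr true ∈ (extGraph G K).neighborSet (Sum.inr false) ∩ S' :=
      ⟨ext_adj_a_b G K, hx⟩
    simp [ha] at this

end Aux

/-- `G'` has a harmless set of size at least `k` (w.r.t. `t'`) iff `G` has a
harmless set `S ⊆ K` of size at least `k` (w.r.t. `t`); moreover every harmless
set of `(G', t')` is contained in `K`. -/
theorem extGraph_harmless_iff {V : Type*} [Fintype V] (G : SimpleGraph V)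
    (t : V → ℕ) (ht : ∀ v, 1 ≤ t v) (K : Set V) :
    (∀ k : ℕ,
      (∃ S' : Set (V ⊕ Bool), HarmlessSet (extGraph G K) (extT t) S' ∧ k ≤ S'.ncard) ↔
        (∃ S : Set V, S ⊆ K ∧ HarmlessSet G t S ∧ k ≤ S.ncard)) ∧
    (∀ S' : Set (V ⊕ Bool), HarmlessSet (extGraph G K) (extT t) S' →
      S' ⊆ Sum.inl '' K) := by
  refine ⟨fun k => ⟨?_, ?_⟩, fun S' hS' => ext_contained G K t hS'⟩
  · rintro ⟨S', hS', hk⟩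
    have hsub := ext_contained G K t hS'
    set S : Set V := Sum.inl ⁻¹' S' with hSdef
    have himg : Sum.inl '' S = S' := by
      apply Set.Subset.antisymm
      · rintro x ⟨v, hv, rfl⟩; exact hv
      · intro x hx
        obtain ⟨v, hvK, rfl⟩ := hsub hx
        exact ⟨v, hx, rfl⟩
    have hSK : S ⊆ K := by
      intro v hv
      obtain ⟨w, hwK, hw⟩ := hsub hv
      rw [Sum.inl.injEq] at hw
      exact hw ▸ hwK
    refine ⟨S, hSK, fun v => ?_, ?_⟩
    · have hmap : Sum.inl '' (G.neighborSet v ∩ S) ⊆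
          (extGraph G K).neighborSet (Sum.inl v) ∩ S' := by
        rintro x ⟨w, ⟨hadj, hwS⟩, rfl⟩
        exact ⟨(ext_adj_inl_inl G K v w).mpr hadj, hwS⟩
      calc (G.neighborSet v ∩ S).ncard
          = (Sum.inl '' (G.neighborSet v ∩ S)).ncard :=
            (Set.ncard_image_of_injective _ Sum.inl_injective).symm
        _ ≤ ((extGraph G K).neighborSet (Sum.inl v) ∩ S').ncard :=
            Set.ncard_le_ncard hmap (Set.toFinite _)
        _ < t v := hS' (Sum.inl v)
    · rwa [← himg, Set.ncard_image_of_injective _ Sum.inl_injective] at hk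
  · rintro ⟨S, hSK, hS, hk⟩
    refine ⟨Sum.inl '' S, fun x => ?_, ?_⟩
    · match x with
      | Sum.inl v =>
        have heq : (extGraph G K).neighborSet (Sum.inl v) ∩ (Sum.inl '' S) =
            Sum.inl '' (G.neighborSet v ∩ S) := by
          ext y
          constructor
          · rintro ⟨hadj, w, hwS, rfl⟩
            exact ⟨w, ⟨(ext_adj_inl_inl G K v w).mp hadj, hwS⟩, rfl⟩
          · rintro ⟨w, ⟨hadj, hwS⟩, rfl⟩
            exact ⟨(ext_adj_inl_inl G K v w).mpr hadj, ⟨w, hwS, rfl⟩⟩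
        rw [heq, Set.ncard_image_of_injective _ Sum.inl_injective]
        exact hS v
      | Sum.inr false =>
        have heq : (extGraph G K).neighborSet (Sum.inr false) ∩ (Sum.inl '' S) = ∅ := by
          ext y
          simp only [Set.mem_inter_iff, Set.mem_empty_iff_false, iff_false, not_and]
          rintro hadj ⟨w, hwS, rfl⟩
          exact ((ext_adj_inl_a G K w).mp hadj.symm) (hSK hwS)
        simp [extT, heq]
      | Sum.inr true =>
        have heq : (extGraph G K).neighborSet (Sum.inr true) ∩ (Sum.inl '' S) = ∅ := by
          ext y
          simp only [Set.mem_inter_iff, Set.mem_empty_iff_false, iff_false, not_and]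
          rintro hadj ⟨w, hwS, rfl⟩
          exact (ext_adj_inl_b G K w) hadj.symm
        simp [extT, heq]
    · rwa [Set.ncard_image_of_injective _ Sum.inl_injective]
end

section
/- Let (G,t) be a threshold instance containing a set F ⊆ V(G) and two adjacent vertices a_F, b_F ∉ F with t(a_F) = t(b_F) = 1 such that a_F is adjacent to every vertex of F. Then every harmless set S for (G,t) satisfies S ∩ (F ∪ {a_F, b_F}) = ∅. -/
/-- The forbidden-set gadget: if `a_F` and `b_F` are adjacent, both of threshold
one, and `a_F` is adjacent to every vertex of `F`, then no harmless set meets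
`F ∪ {a_F, b_F}`. -/
theorem forbidden_gadget {V : Type*} [Fintype V] [DecidableEq V]
    (G : SimpleGraph V) [DecidableRel G.Adj] (t : V → ℕ) (ht : ∀ v, 1 ≤ t v)
    (F : Finset V) (aF bF : V) (haF : aF ∉ F) (hbF : bF ∉ F)
    (hab : G.Adj aF bF) (htaF : t aF = 1) (htbF : t bF = 1)
    (hFadj : ∀ f ∈ F, G.Adj aF f)
    (S : Finset V) (hS : Harmless G t S) :
    S ∩ (F ∪ {aF, bF}) = ∅ := by
  have key : ∀ w, G.Adj aF w → w ∉ S := by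
    intro w hw hwS
    have h := hS aF
    rw [htaF, Nat.lt_one_iff, Finset.card_eq_zero] at h
    have : w ∈ G.neighborFinset aF ∩ S := by
      simp [SimpleGraph.mem_neighborFinset, hw, hwS]
    simp [h] at this
  have haFS : aF ∉ S := by
    intro haFS
    have h := hS bF
    rw [htbF, Nat.lt_one_iff, Finset.card_eq_zero] at h
    have : aF ∈ G.neighborFinset bF ∩ S := by
      simp [SimpleGraph.mem_neighborFinset, hab.symm, haFS]
    simp [h] at this
  ext v
  simp only [Finset.mem_inter, Finset.mem_union, Finset.mem_insert,
    Finset.mem_singleton, Finset.notMem_empty, iff_false, not_and]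
  rintro hvS (hvF | rfl | rfl)
  · exact key v (hFadj v hvF) hvS
  · exact haFS hvS
  · exact key v hab hvS
end

section
/- Let (G,t) be a threshold instance containing 2n distinct vertices d_1,…,d_n (dark) and l_1,…,l_n (light) such that for each s ∈ [n] there is a vertex x_s with t(x_s) = 2 adjacent to both d_s and l_s (an XOR gadget between d_s and l_s). Then every harmless set S for (G,t) satisfies |S ∩ {d_1,…,d_n, l_1,…,l_n}| ≤ n. -/
/-- The selection gadget: `n` dark vertices `d s` and `n` light vertices `l s`,
pairwise connected by XOR gadgets `x s`, admit at most `n` vertices of any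
harmless set. -/
theorem selection_gadget {V : Type*} [Fintype V] [DecidableEq V]
    (G : SimpleGraph V) [DecidableRel G.Adj] (t : V → ℕ) (ht : ∀ v, 1 ≤ t v)
    (n : ℕ) (d l x : Fin n → V)
    (hd : Function.Injective d) (hl : Function.Injective l)
    (hdl : ∀ s s' : Fin n, d s ≠ l s')
    (hx : ∀ s : Fin n, t (x s) = 2 ∧ G.Adj (x s) (d s) ∧ G.Adj (x s) (l s))
    (S : Finset V) (hS : Harmless G t S) :
    (S ∩ (Finset.image d Finset.univ ∪ Finset.image l Finset.univ)).card ≤ n := by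
  classical
  rcases Nat.eq_zero_or_pos n with hn | hn
  · subst hn; simp
  have hne : Nonempty (Fin n) := ⟨⟨0, hn⟩⟩
  -- key: not both d s and l s in S
  have key : ∀ s : Fin n, ¬ (d s ∈ S ∧ l s ∈ S) := by
    rintro s ⟨hds, hls⟩
    obtain ⟨ht2, had, hal⟩ := hx s
    have hsub : ({d s, l s} : Finset V) ⊆ G.neighborFinset (x s) ∩ S := by
      intro v hv
      simp only [Finset.mem_insert, Finset.mem_singleton] at hv
      rcases hv with rfl | rfl <;>
        simp [Finset.mem_inter, SimpleGraph.mem_neighborFinset, had, hal, hds, hls]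
    have h2 : 2 ≤ (G.neighborFinset (x s) ∩ S).card := by
      have : ({d s, l s} : Finset V).card = 2 := by
        rw [Finset.card_insert_of_notMem (by simp [hdl s s]), Finset.card_singleton]
      calc 2 = ({d s, l s} : Finset V).card := this.symm
        _ ≤ _ := Finset.card_le_card hsub
    have := hS (x s)
    omega
  let g : V → Fin n := fun v =>
    if h : ∃ s, v = d s ∨ v = l s then h.choose else Classical.arbitrary _
  have hgspec : ∀ v, (∃ s, v = d s ∨ v = l s) → v = d (g v) ∨ v = l (g v) := by
    intro v h
    simp only [g, dif_pos h]
    exact h.choose_spec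
  have := Finset.card_le_card_of_injOn g
    (s := S ∩ (Finset.image d Finset.univ ∪ Finset.image l Finset.univ))
    (t := (Finset.univ : Finset (Fin n)))
    (fun a _ => Finset.mem_univ _) ?_
  · exact le_trans this (by rw [Finset.card_univ, Fintype.card_fin])
  · intro u hu v hv hguv
    simp only [Finset.mem_coe, Finset.mem_inter, Finset.mem_union, Finset.mem_image, Finset.mem_univ,
      true_and] at hu hv
    obtain ⟨huS, hu'⟩ := hu
    obtain ⟨hvS, hv'⟩ := hv
    have hu2 : ∃ s, u = d s ∨ u = l s := by
      rcases hu' with ⟨s, hs⟩ | ⟨s, hs⟩ <;> exact ⟨s, by simp [hs.symm]⟩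
    have hv2 : ∃ s, v = d s ∨ v = l s := by
      rcases hv' with ⟨s, hs⟩ | ⟨s, hs⟩ <;> exact ⟨s, by simp [hs.symm]⟩
    rcases hgspec u hu2 with hu3 | hu3 <;> rcases hgspec v hv2 with hv3 | hv3
    · rw [hu3, hv3, hguv]
    · exact absurd ⟨hu3 ▸ huS, (hguv ▸ hv3 : v = l (g u)) ▸ hvS⟩ (key (g u))
    · exact absurd ⟨(hguv ▸ hv3 : v = d (g u)) ▸ hvS, hu3 ▸ huS⟩ (key (g u))
    · rw [hu3, hv3, hguv]
end

section
/- Let (G,t) be a threshold instance containing pairwise disjoint light sets L_1,…,L_m, each of size n, distinct dark vertices d_1,…,d_m not in L := L_1 ∪ … ∪ L_m, for each e ∈ [m] and each l ∈ L_e a vertex of threshold 2 adjacent to both d_e and l (an XOR gadget), and a vertex a with t(a) = n+1 adjacent to every vertex of L. Let S be a harmless set for (G,t), call e ∈ [m] active if S ∩ L_e ≠ ∅, and let s be the number of active indices. Then, writing D = {d_1,…,d_m}: if s ≥ 1 then |S ∩ (L ∪ D)| ≤ n + m − s, and if s = 0 then |S ∩ (L ∪ D)| ≤ m. -/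
/-- Counting vertices of a harmless set in a bundle of test gadgets: light sets
`L e` of size `n`, dark vertices `d e` joined to each light vertex of `L e` by an
XOR gadget, and an apex `a` of threshold `n + 1` adjacent to all light vertices.
With `s` the number of active indices (those `e` with `S ∩ L e ≠ ∅`):
if `s ≥ 1` then `|S ∩ (L ∪ D)| ≤ n + m − s`, and if `s = 0` then `|S ∩ (L ∪ D)| ≤ m`. -/
theorem test_gadget_count {V : Type*} [Fintype V] [DecidableEq V]
    (G : SimpleGraph V) [DecidableRel G.Adj] (t : V → ℕ) (ht : ∀ v, 1 ≤ t v)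
    (n m : ℕ) (L : Fin m → Finset V) (hLcard : ∀ e, (L e).card = n)
    (hLdisj : ∀ e e' : Fin m, e ≠ e' → Disjoint (L e) (L e'))
    (d : Fin m → V) (hd : Function.Injective d)
    (hdL : ∀ e e' : Fin m, d e ∉ L e')
    (hxor : ∀ e : Fin m, ∀ l ∈ L e, ∃ x, t x = 2 ∧ G.Adj x (d e) ∧ G.Adj x l)
    (a : V) (hta : t a = n + 1) (haL : ∀ e : Fin m, ∀ l ∈ L e, G.Adj a l)
    (S : Finset V) (hS : Harmless G t S) :
    (1 ≤ (Finset.univ.filter (fun e => (S ∩ L e).Nonempty)).card →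
      (S ∩ (Finset.univ.biUnion L ∪ Finset.image d Finset.univ)).card ≤
        n + m - (Finset.univ.filter (fun e => (S ∩ L e).Nonempty)).card) ∧
    ((Finset.univ.filter (fun e => (S ∩ L e).Nonempty)).card = 0 →
      (S ∩ (Finset.univ.biUnion L ∪ Finset.image d Finset.univ)).card ≤ m) := by
  classical
  set A := Finset.univ.filter (fun e : Fin m => (S ∩ L e).Nonempty) with hA
  -- L and D are disjoint
  have hLD : Disjoint (Finset.univ.biUnion L) (Finset.image d Finset.univ) := by
    simp only [Finset.disjoint_left, Finset.mem_biUnion, Finset.mem_image]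
    rintro x ⟨e, -, hx⟩ ⟨e', -, rfl⟩
    exact hdL e' e hx
  have hsplit : (S ∩ (Finset.univ.biUnion L ∪ Finset.image d Finset.univ)).card
      = (S ∩ Finset.univ.biUnion L).card + (S ∩ Finset.image d Finset.univ).card := by
    rw [Finset.inter_union_distrib_left, Finset.card_union_of_disjoint]
    exact (hLD.mono (Finset.inter_subset_right) (Finset.inter_subset_right))
  -- apex bound
  have h1 : (S ∩ Finset.univ.biUnion L).card ≤ n := by
    have h := hS a
    rw [hta] at h
    have hsub : S ∩ Finset.univ.biUnion L ⊆ G.neighborFinset a ∩ S := by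
      intro x hx
      simp only [Finset.mem_inter, Finset.mem_biUnion] at hx ⊢
      obtain ⟨hxS, e, -, hxL⟩ := hx
      exact ⟨(SimpleGraph.mem_neighborFinset G a x).mpr (haL e x hxL), hxS⟩
    have := Finset.card_le_card hsub
    omega
  -- active darks are not in S
  have hdark : ∀ e ∈ A, d e ∉ S := by
    intro e he hdS
    rw [hA, Finset.mem_filter] at he
    obtain ⟨l, hl⟩ := he.2
    rw [Finset.mem_inter] at hl
    obtain ⟨x, htx, hxd, hxl⟩ := hxor e l hl.2
    have h := hS x
    rw [htx] at h
    have hne : d e ≠ l := fun hq => hdL e e (hq ▸ hl.2)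
    have hsub : ({d e, l} : Finset V) ⊆ G.neighborFinset x ∩ S := by
      intro y hy
      simp only [Finset.mem_insert, Finset.mem_singleton] at hy
      rcases hy with rfl | rfl
      · exact Finset.mem_inter.mpr ⟨(SimpleGraph.mem_neighborFinset G x _).mpr hxd, hdS⟩
      · exact Finset.mem_inter.mpr ⟨(SimpleGraph.mem_neighborFinset G x _).mpr hxl, hl.1⟩
    have := Finset.card_le_card hsub
    rw [Finset.card_insert_of_notMem (by simpa using hne), Finset.card_singleton] at this
    omega
  -- dark bound
  have h2 : (S ∩ Finset.image d Finset.univ).card ≤ m - A.card := by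
    have hsub : S ∩ Finset.image d Finset.univ ⊆ Finset.image d Aᶜ := by
      intro x hx
      rw [Finset.mem_inter, Finset.mem_image] at hx
      obtain ⟨hxS, e, -, rfl⟩ := hx
      exact Finset.mem_image.mpr ⟨e, Finset.mem_compl.mpr (fun he => hdark e he hxS), rfl⟩
    calc (S ∩ Finset.image d Finset.univ).card ≤ (Finset.image d Aᶜ).card :=
          Finset.card_le_card hsub
      _ ≤ Aᶜ.card := Finset.card_image_le
      _ = m - A.card := by rw [Finset.card_compl, Fintype.card_fin]
  have hsm : A.card ≤ m := by
    simpa using Finset.card_le_card (Finset.subset_univ A)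
  constructor
  · intro hs1
    rw [hsplit]
    omega
  · intro hs0
    have hempty : S ∩ Finset.univ.biUnion L = ∅ := by
      rw [Finset.eq_empty_iff_forall_notMem]
      intro x hx
      rw [Finset.mem_inter, Finset.mem_biUnion] at hx
      obtain ⟨hxS, e, -, hxL⟩ := hx
      have heA : e ∈ A := by
        rw [hA, Finset.mem_filter]
        exact ⟨Finset.mem_univ e, ⟨x, Finset.mem_inter.mpr ⟨hxS, hxL⟩⟩⟩
      have := Finset.card_eq_zero.mp hs0
      rw [this] at heA
      exact absurd heA (Finset.notMem_empty e)
    rw [hsplit, hempty]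
    simpa using h2.trans (Nat.sub_le m A.card)
end

section
/- Let (G,t) be a threshold instance, let X ⊆ V(G) be a vertex cover of G, and let S ⊆ X be harmless for (G,t). For each A ⊆ X let R_A = { u ∈ V(G) \ X : N(u) = A }. Then for every natural number s, the following are equivalent: (1) there exists I ⊆ V(G) \ X with |I| = s such that S ∪ I is harmless for (G,t); (2) there exists a function x assigning to each A ⊆ X a natural number x_A with x_A ≤ |R_A| for all A, Σ_{A ⊆ X} x_A = s, and |N(u) ∩ S| + Σ_{A ⊆ X, u ∈ A} x_A < t(u) for every u ∈ X. -/
/-!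
Outside the vertex cover `X` the graph is independent, so a vertex `w ∉ X` contributes to
`|N(v) ∩ I|` exactly when `v` lies in its neighbourhood class `A = N(w) ⊆ X`. Hence the
harmlessness of `S ∪ I` depends only on the class sizes `x_A = |{w ∈ I | N(w) = A}|`, and
conversely any admissible sizes are realised by picking `x_A` vertices from each class.
-/

open Finset

namespace Finset

theorem exists_subset_card_filter_eq {α β : Type*} [DecidableEq α] [DecidableEq β]
    (f : α → β) (s : Finset α) (P : Finset β) (x : β → ℕ)
    (hx : ∀ b ∈ P, x b ≤ #{a ∈ s | f a = b}) :
    ∃ I ⊆ s, ∀ b ∈ P, #{a ∈ I | f a = b} = x b := by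
  have hpick : ∀ b ∈ P, ∃ J ⊆ s.filter (f · = b), #J = x b :=
    fun b hb => exists_subset_card_eq (hx b hb)
  choose J hJs hJcard using hpick
  have hJ : ∀ b (hb : b ∈ P), ∀ a ∈ J b hb, a ∈ s ∧ f a = b :=
    fun b hb a ha => mem_filter.mp (hJs b hb ha)
  refine ⟨P.attach.biUnion fun b => J b.1 b.2, ?_, fun b hb => ?_⟩
  · simp only [biUnion_subset, mem_attach, forall_const, Subtype.forall]
    exact fun b hb a ha => (hJ b hb a ha).1
  · rw [← hJcard b hb]
    congr 1
    ext a
    simp only [mem_filter, mem_biUnion, mem_attach, true_and, Subtype.exists]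
    constructor
    · rintro ⟨⟨c, hc, ha⟩, rfl⟩
      obtain rfl := (hJ c hc a ha).2
      exact ha
    · intro ha
      exact ⟨⟨b, hb, ha⟩, (hJ b hb a ha).2⟩

end Finset

namespace SimpleGraph

variable {V : Type*} [Fintype V] {G : SimpleGraph V} [DecidableRel G.Adj] {X : Finset V}

theorem IsVertexCover.neighborFinset_subset (hX : G.IsVertexCover X) {u : V} (hu : u ∉ X) :
    G.neighborFinset u ⊆ X := fun v hv =>
  (hX (G.mem_neighborFinset u v |>.mp hv)).resolve_left hu

variable [DecidableEq V]

theorem card_eq_sum_card_filter_neighborFinset {J : Finset V}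
    (hJ : ∀ w ∈ J, G.neighborFinset w ⊆ X) :
    #J = ∑ A ∈ X.powerset, #{w ∈ J | G.neighborFinset w = A} :=
  card_eq_sum_card_fiberwise fun w hw => mem_powerset.mpr (hJ w hw)

theorem card_neighborFinset_inter_eq_sum {J : Finset V}
    (hJ : ∀ w ∈ J, G.neighborFinset w ⊆ X) (v : V) :
    #(G.neighborFinset v ∩ J) =
      ∑ A ∈ X.powerset with v ∈ A, #{w ∈ J | G.neighborFinset w = A} := by
  rw [card_eq_sum_card_fiberwise (f := (G.neighborFinset ·)) (t := {A ∈ X.powerset | v ∈ A})]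
  · refine sum_congr rfl fun A hA => congrArg card ?_
    ext w
    simp only [mem_filter, mem_inter, mem_neighborFinset]
    refine ⟨fun h => ⟨h.1.2, h.2⟩, fun h => ⟨⟨?_, h.1⟩, h.2⟩⟩
    have hvw : v ∈ G.neighborFinset w := h.2 ▸ (mem_filter.mp hA).2
    exact (G.mem_neighborFinset w v |>.mp hvw).symm
  · intro w hw
    simp only [coe_inter, Set.mem_inter_iff, mem_coe, mem_neighborFinset] at hw
    simpa only [mem_coe, mem_filter, mem_powerset, mem_neighborFinset]
      using ⟨hJ w hw.2, hw.1.symm⟩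

theorem harmless_union_iff (t : V → ℕ) (hX : G.IsVertexCover X) {S J : Finset V}
    (hSX : S ⊆ X) (hS : Harmless G t S) (hJX : ∀ w ∈ J, w ∉ X) :
    Harmless G t (S ∪ J) ↔ ∀ u ∈ X,
      #(G.neighborFinset u ∩ S) +
        ∑ A ∈ X.powerset with u ∈ A, #{w ∈ J | G.neighborFinset w = A} < t u := by
  have hJ : ∀ w ∈ J, G.neighborFinset w ⊆ X := fun w hw => hX.neighborFinset_subset (hJX w hw)
  have hdisj : Disjoint S J := Finset.disjoint_left.mpr fun w hwS hwJ => hJX w hwJ (hSX hwS)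
  have hcard : ∀ v, #(G.neighborFinset v ∩ (S ∪ J)) = #(G.neighborFinset v ∩ S) +
      ∑ A ∈ X.powerset with v ∈ A, #{w ∈ J | G.neighborFinset w = A} := fun v => by
    rw [inter_union_distrib_left,
      card_union_of_disjoint (hdisj.mono inter_subset_right inter_subset_right),
      card_neighborFinset_inter_eq_sum hJ]
  refine ⟨fun h u _ => hcard u ▸ h u, fun h v => ?_⟩
  by_cases hv : v ∈ X
  · exact hcard v ▸ h v hv
  · have hempty : {A ∈ X.powerset | v ∈ A} = ∅ :=
      filter_eq_empty_iff.mpr fun A hA hvA => hv (mem_powerset.mp hA hvA)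
    simpa only [hcard, hempty, sum_empty, add_zero] using hS v

end SimpleGraph

theorem vertexCover_ILP_correspondence_general {V : Type*} [Fintype V] [DecidableEq V]
    (G : SimpleGraph V) [DecidableRel G.Adj] (t : V → ℕ)
    (X : Finset V) (hX : ∀ u v : V, G.Adj u v → u ∈ X ∨ v ∈ X)
    (S : Finset V) (hSX : S ⊆ X) (hS : Harmless G t S) (s : ℕ) :
    (∃ I : Finset V, (∀ u ∈ I, u ∉ X) ∧ I.card = s ∧ Harmless G t (S ∪ I)) ↔
      (∃ x : Finset V → ℕ,
        (∀ A ∈ X.powerset,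
          x A ≤ (Finset.univ.filter (fun u => u ∉ X ∧ G.neighborFinset u = A)).card) ∧
        (∑ A ∈ X.powerset, x A = s) ∧
        (∀ u ∈ X,
          (G.neighborFinset u ∩ S).card +
            ∑ A ∈ X.powerset.filter (fun A => u ∈ A), x A < t u)) := by
  have hcover : G.IsVertexCover X := fun _ _ => hX _ _
  have hclass : ∀ A, Xᶜ.filter (fun u => G.neighborFinset u = A) =
      univ.filter (fun u => u ∉ X ∧ G.neighborFinset u = A) := fun A => by
    ext u; simp
  have hcard : ∀ {I : Finset V}, (∀ u ∈ I, u ∉ X) →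
      #I = ∑ A ∈ X.powerset, #{w ∈ I | G.neighborFinset w = A} := fun hIX =>
    SimpleGraph.card_eq_sum_card_filter_neighborFinset fun w hw =>
      hcover.neighborFinset_subset (hIX w hw)
  constructor
  · rintro ⟨I, hIX, rfl, hI⟩
    have hIXc : I ⊆ Xᶜ := fun u hu => mem_compl.mpr (hIX u hu)
    refine ⟨fun A => #{w ∈ I | G.neighborFinset w = A},
      fun A _ => card_le_card (hclass A ▸ filter_subset_filter _ hIXc), (hcard hIX).symm,
      (SimpleGraph.harmless_union_iff t hcover hSX hS hIX).mp hI⟩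
  · rintro ⟨x, hxR, rfl, hxt⟩
    obtain ⟨I, hIXc, hIx⟩ := exists_subset_card_filter_eq (G.neighborFinset ·) Xᶜ X.powerset x
      fun A hA => hclass A ▸ hxR A hA
    have hIX : ∀ u ∈ I, u ∉ X := fun u hu => mem_compl.mp (hIXc hu)
    refine ⟨I, hIX, (hcard hIX).trans (sum_congr rfl hIx),
      (SimpleGraph.harmless_union_iff t hcover hSX hS hIX).mpr fun u hu => ?_⟩
    have hsum := sum_congr rfl fun A (hA : A ∈ {A ∈ X.powerset | u ∈ A}) =>
      hIx A (mem_filter.mp hA).1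
    exact (congrArg _ hsum).trans_lt (hxt u hu)

/-- ILP correspondence: with `X` a vertex cover, `S ⊆ X` harmless, and
`R_A = {u ∉ X : N(u) = A}` for `A ⊆ X`, there is an `I ⊆ V ∖ X` of size `s`
with `S ∪ I` harmless iff there are numbers `x_A ≤ |R_A|` summing to `s` such
that `|N(u) ∩ S| + Σ_{A ∋ u} x_A < t u` for all `u ∈ X`. -/
theorem vertexCover_ILP_correspondence {V : Type*} [Fintype V] [DecidableEq V]
    (G : SimpleGraph V) [DecidableRel G.Adj] (t : V → ℕ) (ht : ∀ v, 1 ≤ t v)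
    (X : Finset V) (hX : ∀ u v : V, G.Adj u v → u ∈ X ∨ v ∈ X)
    (S : Finset V) (hSX : S ⊆ X) (hS : Harmless G t S) (s : ℕ) :
    (∃ I : Finset V, (∀ u ∈ I, u ∉ X) ∧ I.card = s ∧ Harmless G t (S ∪ I)) ↔
      (∃ x : Finset V → ℕ,
        (∀ A ∈ X.powerset,
          x A ≤ (Finset.univ.filter (fun u => u ∉ X ∧ G.neighborFinset u = A)).card) ∧
        (∑ A ∈ X.powerset, x A = s) ∧
        (∀ u ∈ X,
          (G.neighborFinset u ∩ S).card +
            ∑ A ∈ X.powerset.filter (fun A => u ∈ A), x A < t u)) :=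
  vertexCover_ILP_correspondence_general G t X hX S hSX hS s
end

section
/- If the k-partite graph G contains a multicoloured clique on k vertices, then the constructed threshold instance (H,t) has a harmless set of size C(k,2)·(n−1) + k·n + m, where C(k,2) = k(k−1)/2. -/
/-- Raw vertices of the constructed graph `H` for the reduction from
Multicoloured Clique: the vertices `a_F`, `b_F`, the dark/light/XOR vertices of
the selection gadgets, the four port vertices of each port gadget
(`plus : Bool` distinguishes `p⁺` from `p⁻`, `side : Bool` distinguishes the
side `i` from the side `j`), the light/dark/XOR vertices of the test gadgets,
and the apices `a_{ij}`. -/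
inductive HVert (k n : ℕ) : Type where
  | aF : HVert k n
  | bF : HVert k n
  | selD : Fin k → Fin n → HVert k n
  | selL : Fin k → Fin n → HVert k n
  | selX : Fin k → Fin n → HVert k n
  | port : Fin k → Fin k → Bool → Bool → HVert k n
  | testL : Fin k → Fin k → Fin n → Fin n → Fin n → HVert k n
  | testD : Fin k → Fin k → Fin n → Fin n → HVert k n
  | testX : Fin k → Fin k → Fin n → Fin n → Fin n → HVert k n
  | apex : Fin k → Fin k → HVert k n

/-- Which raw vertices actually exist: port gadgets and apices exist for every
pair `i < j`, and the test gadget `T_{xy}` for the pair `i < j` exists precisely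
when `v^i_x v^j_y` is an edge of `G` (encoded by the relation `E`). -/
def HValid {k n : ℕ} (E : Fin k → Fin n → Fin k → Fin n → Prop) : HVert k n → Prop
  | .port i j _ _ => i < j
  | .apex i j => i < j
  | .testL i j x y _ => i < j ∧ E i x j y
  | .testD i j x y => i < j ∧ E i x j y
  | .testX i j x y _ => i < j ∧ E i x j y
  | _ => True

/-- The base adjacency relation of the constructed graph `H` (symmetrised by
`SimpleGraph.fromRel`).  Indices `x y r : Fin n` are 0-based, representing the
paper's 1-based indices `x+1`, `y+1`, `r+1`; so `p⁺` is adjacent to the light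
vertex `l_{r+1}` of `T_{(x+1)(y+1)}` iff `r + 1 ≤ n − (x + 1)`,
i.e. `r + x + 2 ≤ n`, and `p⁻` to the remaining light vertices. -/
def hRel {k n : ℕ} : HVert k n → HVert k n → Prop
  | .aF, .bF => True
  | .aF, .selX _ _ => True
  | .aF, .testX _ _ _ _ _ => True
  | .aF, .port _ _ _ _ => True
  | .aF, .apex _ _ => True
  | .selX i s, .selD i' s' => i = i' ∧ s = s'
  | .selX i s, .selL i' s' => i = i' ∧ s = s'
  | .port i j plus side, .selL i' _ => (if side then j else i) = i' ∧ plus = true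
  | .port i j plus side, .selD i' _ => (if side then j else i) = i' ∧ plus = false
  | .port i j plus side, .testL i' j' x y r =>
      i = i' ∧ j = j' ∧
      ((plus = true ∧ (r : ℕ) + (if side then (y : ℕ) else (x : ℕ)) + 2 ≤ n) ∨
       (plus = false ∧ n < (r : ℕ) + (if side then (y : ℕ) else (x : ℕ)) + 2))
  | .testX i j x y _, .testD i' j' x' y' => i = i' ∧ j = j' ∧ x = x' ∧ y = y'
  | .testX i j x y r, .testL i' j' x' y' r' =>
      i = i' ∧ j = j' ∧ x = x' ∧ y = y' ∧ r = r'
  | .apex i j, .testL i' j' _ _ _ => i = i' ∧ j = j'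
  | _, _ => False

/-- The constructed graph `H` of the reduction, on the valid vertices. -/
def HBig {k n : ℕ} (E : Fin k → Fin n → Fin k → Fin n → Prop) :
    SimpleGraph {v : HVert k n // HValid E v} :=
  SimpleGraph.fromRel (fun a b => hRel a.1 b.1)

/-- The threshold function of the constructed instance: `a_F, b_F` get
threshold `1`, the XOR vertices get `2`, ports and apices get `n + 1`, and all
light and dark vertices of selection and test gadgets get their degree plus one
(so they impose no constraint). -/
noncomputable def hT {k n : ℕ} (E : Fin k → Fin n → Fin k → Fin n → Prop) :
    {v : HVert k n // HValid E v} → ℕ := fun v =>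
  match v.1 with
  | .aF => 1
  | .bF => 1
  | .selX _ _ => 2
  | .testX _ _ _ _ _ => 2
  | .port _ _ _ _ => n + 1
  | .apex _ _ => n + 1
  | _ => ((HBig E).neighborSet v).ncard + 1

/-- The total number `m` of edges of the multicoloured-clique instance,
counting each edge once (with its smaller colour first). -/
noncomputable def mTotal {k n : ℕ} (E : Fin k → Fin n → Fin k → Fin n → Prop) : ℕ :=
  {q : (Fin k × Fin n) × (Fin k × Fin n) |
    q.1.1 < q.2.1 ∧ E q.1.1 q.1.2 q.2.1 q.2.2}.ncard

/-!
From the clique `c` (so `c i : Fin n` is the 0-based index of the chosen vertex of colour `i`)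
take, in each selection gadget `S_i`, the light vertices up to position `c i` and the dark ones
after it; all `n` light vertices of the test gadget of each clique edge; and the dark vertex of
every other test gadget. Each XOR vertex then sees exactly one vertex of this set, and the apex
`a_{ij}` only the `n` lights of the clique's test gadget. The port `p⁺_ℓ` of `P_{ij}` sees the
`c ℓ + 1` chosen lights of `S_ℓ` and the `n - c ℓ - 1` lights of the clique's test gadget wired
to it, `n` in all, and symmetrically for `p⁻_ℓ`. The set has `k n` selection vertices,
`C(k,2) n` test lights and `m - C(k,2)` test darks.
-/

namespace HVert

variable {k n : ℕ}

def encode : HVert k n →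
    Fin 10 × Option (Fin k) × Option (Fin k) × Option (Fin n) × Option (Fin n) × Option (Fin n)
      × Bool × Bool
  | aF => (0, none, none, none, none, none, false, false)
  | bF => (1, none, none, none, none, none, false, false)
  | selD i s => (2, i, none, s, none, none, false, false)
  | selL i s => (3, i, none, s, none, none, false, false)
  | selX i s => (4, i, none, s, none, none, false, false)
  | port i j p q => (5, i, j, none, none, none, p, q)
  | testL i j x y r => (6, i, j, x, y, r, false, false)
  | testD i j x y => (7, i, j, x, y, none, false, false)
  | testX i j x y r => (8, i, j, x, y, r, false, false)
  | apex i j => (9, i, j, none, none, none, false, false)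

lemma encode_injective : Function.Injective (encode (k := k) (n := n)) := by
  intro a b h
  cases a <;> cases b <;> simp_all [encode]

instance : Finite (HVert k n) := Finite.of_injective _ encode_injective

end HVert

lemma Set.ncard_le_of_subset_range_fin {α : Type*} {n : ℕ} {s : Set α} {f : Fin n → α}
    (h : s ⊆ Set.range f) : s.ncard ≤ n :=
  calc s.ncard ≤ (Set.range f).ncard := Set.ncard_le_ncard h (Set.finite_range f)
    _ = Nat.card (Set.range f) := (Nat.card_coe_set_eq _).symm
    _ ≤ n := (Finite.card_range_le f).trans_eq (Nat.card_fin n)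

lemma ncard_setOf_fst_lt_snd (k : ℕ) : {p : Fin k × Fin k | p.1 < p.2}.ncard = k.choose 2 := by
  simpa [← Set.ncard_coe_finset] using Fintype.card_product_filter_lt (α := Fin k)

section Harmless

variable {k n : ℕ}

def InCliqueSet (c : Fin k → Fin n) : HVert k n → Prop
  | .selL i s => s ≤ c i
  | .selD i s => c i < s
  | .testL i j x y _ => x = c i ∧ y = c j
  | .testD i j x y => ¬(x = c i ∧ y = c j)
  | _ => False

def cliqueNeighbours (c : Fin k → Fin n) (v : HVert k n) : Set (HVert k n) :=
  {u | (hRel v u ∨ hRel u v) ∧ InCliqueSet c u}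

def selVertex (c : Fin k → Fin n) (p : Fin k × Fin n) : HVert k n :=
  if p.2 ≤ c p.1 then .selL p.1 p.2 else .selD p.1 p.2

/-- The `n` neighbours of the port `p^±_ℓ` of `P_{ij}` in the clique set, by position: selection
vertices fill the positions up to (for `p⁺`) or after (for `p⁻`) `c ℓ`, and the lights of the
clique's test gadget fill the others. -/
def portSlot (c : Fin k → Fin n) (i j ℓ : Fin k) : Bool → Fin n → HVert k n
  | true, t =>
    if t ≤ c ℓ then .selL ℓ t else .testL i j (c i) (c j) ⟨t - (c ℓ + 1), by omega⟩
  | false, t =>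
    if h : c ℓ < t then .selD ℓ t
    else .testL i j (c i) (c j) ⟨t + n - (c ℓ + 1), by omega⟩

variable (c : Fin k → Fin n)

lemma cliqueNeighbours_aF : cliqueNeighbours c .aF = ∅ := by
  ext u; cases u <;> simp [cliqueNeighbours, hRel, InCliqueSet]

lemma cliqueNeighbours_bF : cliqueNeighbours c .bF = ∅ := by
  ext u; cases u <;> simp [cliqueNeighbours, hRel, InCliqueSet]

lemma cliqueNeighbours_selX_subset (i : Fin k) (s : Fin n) :
    cliqueNeighbours c (.selX i s) ⊆ {selVertex c (i, s)} := by
  rintro u ⟨hadj, hS⟩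
  cases u <;> simp only [hRel, InCliqueSet, or_false, false_or] at hadj hS
  case selD => obtain ⟨rfl, rfl⟩ := hadj; simp [selVertex, not_le.2 hS]
  case selL => obtain ⟨rfl, rfl⟩ := hadj; simp [selVertex, hS]

lemma cliqueNeighbours_testX_subset (i j : Fin k) (x y r : Fin n) :
    cliqueNeighbours c (.testX i j x y r) ⊆
      {if x = c i ∧ y = c j then .testL i j x y r else .testD i j x y} := by
  rintro u ⟨hadj, hS⟩
  cases u <;> simp only [hRel, InCliqueSet, or_false, false_or] at hadj hS
  case testL => obtain ⟨rfl, rfl, rfl, rfl, rfl⟩ := hadj; simp [hS]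
  case testD => obtain ⟨rfl, rfl, rfl, rfl⟩ := hadj; simp [hS]

lemma cliqueNeighbours_apex_subset (i j : Fin k) :
    cliqueNeighbours c (.apex i j) ⊆ Set.range (.testL i j (c i) (c j)) := by
  rintro u ⟨hadj, hS⟩
  cases u <;> simp only [hRel, InCliqueSet, or_false, false_or] at hadj hS
  case testL => obtain ⟨rfl, rfl⟩ := hadj; obtain ⟨rfl, rfl⟩ := hS; exact ⟨_, rfl⟩

lemma cliqueNeighbours_port_subset (i j : Fin k) (plus side : Bool) :
    cliqueNeighbours c (.port i j plus side) ⊆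
      Set.range (portSlot c i j (if side then j else i) plus) := by
  generalize hℓ : (if side then j else i) = ℓ
  have hcℓ : (if side then (c j : ℕ) else c i) = c ℓ := by rw [← hℓ]; cases side <;> rfl
  rintro u ⟨hadj, hS⟩
  cases u <;> simp only [hRel, InCliqueSet, or_false, false_or, hℓ] at hadj hS
  case selD s => obtain ⟨rfl, rfl⟩ := hadj; exact ⟨s, by simp [portSlot, hS]⟩
  case selL s => obtain ⟨rfl, rfl⟩ := hadj; exact ⟨s, by simp [portSlot, hS]⟩
  case testL r =>
    obtain ⟨rfl, rfl, h⟩ := hadj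
    obtain ⟨rfl, rfl⟩ := hS
    rw [hcℓ] at h
    rcases h with ⟨rfl, h⟩ | ⟨rfl, h⟩
    · exact ⟨⟨r + c ℓ + 1, by omega⟩, by simp [portSlot, Fin.le_def]⟩
    · refine ⟨⟨r + c ℓ + 1 - n, by omega⟩, ?_⟩
      have hr := r.isLt
      simp only [portSlot, Fin.lt_def, show ¬(c ℓ : ℕ) < r + c ℓ + 1 - n by omega,
        ↓reduceDIte, HVert.testL.injEq, Fin.ext_iff, true_and]
      omega

lemma ncard_neighborSet_inter_le_cliqueNeighbours (E : Fin k → Fin n → Fin k → Fin n → Prop)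
    (v : {v : HVert k n // HValid E v}) :
    ((HBig E).neighborSet v ∩ {w | InCliqueSet c w.1}).ncard ≤
      (cliqueNeighbours c v.1).ncard := by
  rw [← Set.ncard_image_of_injective _ Subtype.val_injective]
  refine Set.ncard_le_ncard ?_ (Set.toFinite _)
  rintro _ ⟨w, ⟨hadj, hw⟩, rfl⟩
  exact ⟨((SimpleGraph.fromRel_adj (fun a b : {v // HValid E v} => hRel a.1 b.1) v w).1 hadj).2,
    hw⟩

theorem harmlessSet_inCliqueSet (E : Fin k → Fin n → Fin k → Fin n → Prop) :
    HarmlessSet (HBig E) (hT E) {v | InCliqueSet c v.1} := by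
  rintro ⟨v, hv⟩
  have hle := ncard_neighborSet_inter_le_cliqueNeighbours c E ⟨v, hv⟩
  cases v
  case aF => rw [cliqueNeighbours_aF, Set.ncard_empty] at hle; exact Nat.lt_one_iff.2 (by omega)
  case bF => rw [cliqueNeighbours_bF, Set.ncard_empty] at hle; exact Nat.lt_one_iff.2 (by omega)
  case selX i s =>
    have hxor := Set.ncard_le_ncard (cliqueNeighbours_selX_subset c i s)
    rw [Set.ncard_singleton] at hxor
    exact Nat.lt_succ_of_le (hle.trans hxor)
  case testX i j x y r =>
    have hxor := Set.ncard_le_ncard (cliqueNeighbours_testX_subset c i j x y r)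
    rw [Set.ncard_singleton] at hxor
    exact Nat.lt_succ_of_le (hle.trans hxor)
  case port i j plus side =>
    exact Nat.lt_succ_of_le
      (hle.trans (Set.ncard_le_of_subset_range_fin (cliqueNeighbours_port_subset c i j plus side)))
  case apex i j =>
    exact Nat.lt_succ_of_le
      (hle.trans (Set.ncard_le_of_subset_range_fin (cliqueNeighbours_apex_subset c i j)))
  case selD | selL | testL | testD =>
    exact Nat.lt_succ_of_le (Set.ncard_inter_le_ncard_left _ _)

end Harmless

section Counting

variable {k n : ℕ} {E : Fin k → Fin n → Fin k → Fin n → Prop} {c : Fin k → Fin n}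

def cliqueLight (c : Fin k → Fin n) (p : (Fin k × Fin k) × Fin n) : HVert k n :=
  .testL p.1.1 p.1.2 (c p.1.1) (c p.1.2) p.2

def testDark (q : (Fin k × Fin n) × (Fin k × Fin n)) : HVert k n :=
  .testD q.1.1 q.2.1 q.1.2 q.2.2

def edgePairs (E : Fin k → Fin n → Fin k → Fin n → Prop) :
    Set ((Fin k × Fin n) × (Fin k × Fin n)) :=
  {q | q.1.1 < q.2.1 ∧ E q.1.1 q.1.2 q.2.1 q.2.2}

def cliqueEdges (c : Fin k → Fin n) : Set ((Fin k × Fin n) × (Fin k × Fin n)) :=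
  (fun p : Fin k × Fin k => ((p.1, c p.1), (p.2, c p.2))) '' {p | p.1 < p.2}

lemma selVertex_injective : Function.Injective (selVertex c) := by
  intro p q h
  unfold selVertex at h
  split_ifs at h <;> simp_all [Prod.ext_iff]

lemma cliqueLight_injective : Function.Injective (cliqueLight c) := by
  intro p q h
  simp_all [cliqueLight, Prod.ext_iff]

lemma testDark_injective : Function.Injective (testDark (k := k) (n := n)) := by
  intro p q h
  simp_all [testDark, Prod.ext_iff]

lemma ncard_cliqueEdges : (cliqueEdges c).ncard = k.choose 2 := by
  rw [cliqueEdges, Set.ncard_image_of_injective _ (fun p q h => by simp_all [Prod.ext_iff]),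
    ncard_setOf_fst_lt_snd]

lemma cliqueEdges_subset_edgePairs (hc : ∀ i j : Fin k, i ≠ j → E i (c i) j (c j)) :
    cliqueEdges c ⊆ edgePairs E := by
  rintro _ ⟨p, hp, rfl⟩
  exact ⟨hp, hc _ _ hp.ne⟩

lemma choose_two_le_mTotal (hc : ∀ i j : Fin k, i ≠ j → E i (c i) j (c j)) :
    k.choose 2 ≤ mTotal E :=
  ncard_cliqueEdges (c := c) ▸ Set.ncard_le_ncard (cliqueEdges_subset_edgePairs hc)

lemma image_val_inCliqueSet (hc : ∀ i j : Fin k, i ≠ j → E i (c i) j (c j)) :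
    Subtype.val '' {v : {v : HVert k n // HValid E v} | InCliqueSet c v.1} =
      Set.range (selVertex c) ∪ cliqueLight c '' ({p | p.1 < p.2} ×ˢ Set.univ) ∪
        testDark '' (edgePairs E \ cliqueEdges c) := by
  ext u
  cases u <;> simp [HValid, InCliqueSet, selVertex, cliqueLight, testDark, edgePairs, cliqueEdges,
    ite_eq_iff]
  case testL i j x y r =>
    constructor
    · rintro ⟨⟨rfl, rfl⟩, hij, -⟩
      exact ⟨hij, rfl, rfl⟩
    · rintro ⟨hij, rfl, rfl⟩
      exact ⟨⟨rfl, rfl⟩, hij, hc _ _ hij.ne⟩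
  case testD => grind

lemma ncard_inCliqueSet (hc : ∀ i j : Fin k, i ≠ j → E i (c i) j (c j)) :
    {v : {v : HVert k n // HValid E v} | InCliqueSet c v.1}.ncard =
      k * n + k.choose 2 * n + (mTotal E - k.choose 2) := by
  have hsel :
      Disjoint (Set.range (selVertex c)) (cliqueLight c '' ({p | p.1 < p.2} ×ˢ Set.univ)) := by
    rw [Set.disjoint_left]
    rintro _ ⟨p, rfl⟩ ⟨q, -, h⟩
    unfold selVertex at h
    split_ifs at h <;> simp [cliqueLight] at h
  have hdark : Disjoint (Set.range (selVertex c) ∪ cliqueLight c '' ({p | p.1 < p.2} ×ˢ Set.univ))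
      (testDark '' (edgePairs E \ cliqueEdges c)) := by
    rw [Set.disjoint_left]
    rintro _ (⟨p, rfl⟩ | ⟨p, -, rfl⟩) ⟨q, -, h⟩
    · unfold selVertex at h
      split_ifs at h <;> simp [testDark] at h
    · simp [testDark, cliqueLight] at h
  rw [← Set.ncard_image_of_injective _ Subtype.val_injective, image_val_inCliqueSet hc,
    Set.ncard_union_eq hdark, Set.ncard_union_eq hsel, ← Set.image_univ,
    Set.ncard_image_of_injective _ selVertex_injective,
    Set.ncard_image_of_injective _ cliqueLight_injective,
    Set.ncard_image_of_injective _ testDark_injective,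
    Set.ncard_sdiff (cliqueEdges_subset_edgePairs hc), Set.ncard_prod, ncard_setOf_fst_lt_snd,
    ncard_cliqueEdges]
  simp [mTotal, edgePairs]

end Counting

theorem multicolouredClique_to_harmless_general (k n : ℕ) (hk : 2 ≤ k)
    (E : Fin k → Fin n → Fin k → Fin n → Prop)
    (c : Fin k → Fin n) (hc : ∀ i j : Fin k, i ≠ j → E i (c i) j (c j)) :
    ∃ S : Set {v : HVert k n // HValid E v},
      HarmlessSet (HBig E) (hT E) S ∧
      S.ncard = Nat.choose k 2 * (n - 1) + k * n + mTotal E := by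
  refine ⟨{v | InCliqueSet c v.1}, harmlessSet_inCliqueSet c E, ?_⟩
  have hn : 0 < n := (c ⟨0, by omega⟩).pos
  have hm := choose_two_le_mTotal hc
  have hCn := Nat.le_mul_of_pos_right (k.choose 2) hn
  rw [ncard_inCliqueSet hc, Nat.mul_sub_one]
  omega

/-- Completeness: if `G` contains a multicoloured clique on `k` vertices, then
the constructed instance `(H, t)` has a harmless set of size
`C(k,2)·(n−1) + k·n + m`. -/
theorem multicolouredClique_to_harmless (k n : ℕ) (hk : 2 ≤ k)
    (E : Fin k → Fin n → Fin k → Fin n → Prop)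
    (hsymm : ∀ i x j y, E i x j y → E j y i x)
    (hpart : ∀ i x j y, E i x j y → i ≠ j)
    (c : Fin k → Fin n) (hc : ∀ i j : Fin k, i ≠ j → E i (c i) j (c j)) :
    ∃ S : Set {v : HVert k n // HValid E v},
      HarmlessSet (HBig E) (hT E) S ∧
      S.ncard = Nat.choose k 2 * (n - 1) + k * n + mTotal E :=
  multicolouredClique_to_harmless_general k n hk E c hc
end

section
/- There exists a set M of exactly 5·C(k,2) + 1 vertices of the constructed graph H (namely the four port vertices of each port gadget P_{ij}, the apex a_{ij} for each pair i < j, and the vertex a_F) such that the graph H − M obtained by deleting M is a 2-spider-forest. -/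
/-- A graph is a 2-spider-forest (a disjoint union of stars with each edge
subdivided at most once) iff its vertices can be assigned roles `0` (centre),
`1`, `2` and attachment pointers `att` such that the edges are exactly the
pairs `{v, att v}` with the role of `v` one more than that of `att v`, and
distinct role-2 vertices have distinct attachments (each subdivision vertex
carries exactly one leaf). -/
def IsTwoSpiderForest {W : Type*} (G : SimpleGraph W) : Prop :=
  ∃ (role : W → ℕ) (att : W → W),
    (∀ v, role v ≤ 2) ∧
    (∀ u v, G.Adj u v ↔
      ((role u = role v + 1 ∧ att u = v) ∨ (role v = role u + 1 ∧ att v = u))) ∧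
    (∀ u v, role u = 2 → role v = 2 → att u = att v → u = v)

/-- Membership in the modulator `M`: the four port vertices of each port gadget,
the apex of each pair, and the vertex `a_F`. -/
def isModVert {k n : ℕ} : HVert k n → Prop
  | .port _ _ _ _ => True
  | .apex _ _ => True
  | .aF => True
  | _ => False


section AuxSpider

/-- Role assignment on raw vertices for the 2-spider-forest structure. -/
def roleFun {k n : ℕ} : HVert k n → ℕ
  | .selD _ _ => 1
  | .selL _ _ => 1
  | .testX _ _ _ _ _ => 1
  | .testL _ _ _ _ _ => 2
  | _ => 0

/-- Attachment map on raw vertices (with their validity proofs). -/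
def attVert {k n : ℕ} (E : Fin k → Fin n → Fin k → Fin n → Prop) :
    (v : HVert k n) → HValid E v → {v : HVert k n // HValid E v}
  | .selD i s, _ => ⟨.selX i s, trivial⟩
  | .selL i s, _ => ⟨.selX i s, trivial⟩
  | .testX i j x y _, h => ⟨.testD i j x y, h⟩
  | .testL i j x y r, h => ⟨.testX i j x y r, h⟩
  | v, h => ⟨v, h⟩

lemma attVert_notMod {k n : ℕ} (E : Fin k → Fin n → Fin k → Fin n → Prop)
    (v : HVert k n) (h : HValid E v) (hm : ¬ isModVert v) :
    ¬ isModVert (attVert E v h).1 := by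
  cases v <;> simp_all [attVert, isModVert]

lemma roleFun_le_two {k n : ℕ} (v : HVert k n) : roleFun v ≤ 2 := by
  cases v <;> simp [roleFun]

lemma adj_iff_spider {k n : ℕ} (E : Fin k → Fin n → Fin k → Fin n → Prop)
    (a b : {v : HVert k n // HValid E v}) (ha : ¬ isModVert a.1) (hb : ¬ isModVert b.1) :
    (HBig E).Adj a b ↔
      ((roleFun a.1 = roleFun b.1 + 1 ∧ attVert E a.1 a.2 = b) ∨
       (roleFun b.1 = roleFun a.1 + 1 ∧ attVert E b.1 b.2 = a)) := by
  obtain ⟨u, hu⟩ := a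
  obtain ⟨v, hv⟩ := b
  rw [HBig, SimpleGraph.fromRel_adj]
  cases u <;> cases v <;>
    simp_all [hRel, isModVert, roleFun, attVert, Subtype.ext_iff] <;> tauto

lemma role2_inj {k n : ℕ} (E : Fin k → Fin n → Fin k → Fin n → Prop)
    (a b : {v : HVert k n // HValid E v})
    (h2a : roleFun a.1 = 2) (h2b : roleFun b.1 = 2)
    (hatt : attVert E a.1 a.2 = attVert E b.1 b.2) : a = b := by
  obtain ⟨u, hu⟩ := a
  obtain ⟨v, hv⟩ := b
  cases u <;> cases v <;> simp_all [roleFun, attVert, Subtype.ext_iff]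

lemma card_ltPairs (k : ℕ) :
    Fintype.card {p : Fin k × Fin k // p.1 < p.2} = k.choose 2 := by
  rw [Fintype.card_congr (⟨fun p => (⟨p.1.2, ⟨p.1.1.1, p.2⟩⟩ : Σ j : Fin k, Fin j.1),
      fun q => ⟨(⟨q.2.1, q.2.2.trans q.1.2⟩, q.1), q.2.2⟩,
      fun p => by ext <;> rfl, fun q => by rfl⟩ :
      {p : Fin k × Fin k // p.1 < p.2} ≃ (Σ j : Fin k, Fin j.1))]
  rw [Fintype.card_sigma]
  simp only [Fintype.card_fin]
  rw [Fin.sum_univ_eq_sum_range (fun i => i) k, Finset.sum_range_id, Nat.choose_two_right]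

lemma modCard {k n : ℕ} (E : Fin k → Fin n → Fin k → Fin n → Prop) :
    ({v : {v : HVert k n // HValid E v} | isModVert v.1} :
        Set {v : HVert k n // HValid E v}).ncard = 5 * Nat.choose k 2 + 1 := by
  set T := Unit ⊕ ({p : Fin k × Fin k // p.1 < p.2} × Bool × Bool) ⊕
    {p : Fin k × Fin k // p.1 < p.2} with hTdef
  let f : T → {v : HVert k n // HValid E v} := fun t =>
    match t with
    | .inl _ => ⟨.aF, trivial⟩
    | .inr (.inl (⟨(i, j), h⟩, b1, b2)) => ⟨.port i j b1 b2, h⟩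
    | .inr (.inr ⟨(i, j), h⟩) => ⟨.apex i j, h⟩
  have hinj : Function.Injective f := by
    rintro (a | ⟨⟨⟨i,j⟩,h⟩,b1,b2⟩ | ⟨⟨i,j⟩,h⟩) (b | ⟨⟨⟨i',j'⟩,h'⟩,b1',b2'⟩ | ⟨⟨i',j'⟩,h'⟩) hab <;>
      simp_all [f, Subtype.ext_iff]
  have himg : {v : {v : HVert k n // HValid E v} | isModVert v.1} = f '' Set.univ := by
    ext ⟨v, hv⟩
    constructor
    · intro h
      cases v with
      | aF => exact ⟨Sum.inl (), trivial, rfl⟩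
      | port i j b1 b2 => exact ⟨Sum.inr (Sum.inl (⟨(i,j), hv⟩, b1, b2)), trivial, rfl⟩
      | apex i j => exact ⟨Sum.inr (Sum.inr ⟨(i,j), hv⟩), trivial, rfl⟩
      | _ => simp [isModVert] at h
    · rintro ⟨(a | ⟨⟨⟨i,j⟩,hij⟩,b1,b2⟩ | ⟨⟨i,j⟩,hij⟩), -, hfv⟩ <;> rw [← hfv] <;>
        simp [f, isModVert]
  rw [himg, Set.ncard_image_of_injective _ hinj, Set.ncard_univ, hTdef,
    Nat.card_eq_fintype_card]
  simp [card_ltPairs]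
  ring

end AuxSpider

/-- Deleting the `5·C(k,2) + 1` vertices of the modulator `M` (the port
vertices, the apices, and `a_F`) from the constructed graph `H` leaves a
2-spider-forest. -/
theorem modulator_to_twoSpiderForest (k n : ℕ) (hk : 2 ≤ k)
    (E : Fin k → Fin n → Fin k → Fin n → Prop)
    (hsymm : ∀ i x j y, E i x j y → E j y i x)
    (hpart : ∀ i x j y, E i x j y → i ≠ j) :
    (({v : {v : HVert k n // HValid E v} | isModVert v.1} :
        Set {v : HVert k n // HValid E v}).ncard = 5 * Nat.choose k 2 + 1) ∧
    IsTwoSpiderForest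
      ((HBig E).induce
        ({v : {v : HVert k n // HValid E v} | isModVert v.1}ᶜ :
          Set {v : HVert k n // HValid E v})) := by
  refine ⟨modCard E, ?_⟩
  refine ⟨fun w => roleFun w.1.1,
    fun w => ⟨attVert E w.1.1 w.1.2, attVert_notMod E w.1.1 w.1.2 w.2⟩, ?_, ?_, ?_⟩
  · intro w
    exact roleFun_le_two w.1.1
  · intro u v
    have : ((HBig E).induce
        ({v : {v : HVert k n // HValid E v} | isModVert v.1}ᶜ :
          Set {v : HVert k n // HValid E v})).Adj u v ↔ (HBig E).Adj u.1 v.1 := Iff.rfl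
    rw [this, adj_iff_spider E u.1 v.1 u.2 v.2]
    constructor
    · rintro (⟨h1, h2⟩ | ⟨h1, h2⟩)
      · exact Or.inl ⟨h1, Subtype.ext h2⟩
      · exact Or.inr ⟨h1, Subtype.ext h2⟩
    · rintro (⟨h1, h2⟩ | ⟨h1, h2⟩)
      · exact Or.inl ⟨h1, congrArg Subtype.val h2⟩
      · exact Or.inr ⟨h1, congrArg Subtype.val h2⟩
  · intro u v h2u h2v hatt
    exact Subtype.ext (role2_inj E u.1 v.1 h2u h2v (congrArg Subtype.val hatt))
end
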